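/- arXiv:1106.0092 — 10 statements merged into one kernel-verified Lean document; each statement's English description precedes it below -/
import Mathlib

section
/- The function U(x,t) = sin(x)/√(cos²(x) + e^{2t}), defined for all (x,t) ∈ ℝ², satisfies the nonlinear diffusion equation U_t = ∂_x(U_x/(1 + U²)) at every point of ℝ². -/
/-!
With `g = cos² x + e^{2t}` one has `1 + U² = (1 + e^{2t}) / g` because `sin² + cos² = 1`,
so the flux `U_x / (1 + U²)` collapses to `cos x / √g`. Both `∂_x (cos x / √g)` and `U_t`
then come out as `-sin x · e^{2t} / g^{3/2}`, by the quotient rule for `f / √g`.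
-/

open Real

theorem HasDerivAt.div_sqrt {f g : ℝ → ℝ} {f' g' x : ℝ} (hf : HasDerivAt f f' x)
    (hg : HasDerivAt g g' x) (hgx : 0 < g x) :
    HasDerivAt (fun y => f y / √(g y)) ((f' * g x - f x * g' / 2) / (g x * √(g x))) x := by
  have hs : 0 < √(g x) := sqrt_pos.2 hgx
  refine (hf.div (hg.sqrt hgx.ne') hs.ne').congr_deriv ?_
  have hsq : √(g x) ^ 2 = g x := sq_sqrt hgx.le
  field_simp
  rw [hsq]
  ring

section CosSqAdd

variable {a : ℝ} (ξ : ℝ)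

theorem cos_sq_add_pos (ha : 0 < a) : 0 < cos ξ ^ 2 + a := by positivity

theorem hasDerivAt_cos_sq_add :
    HasDerivAt (fun y => cos y ^ 2 + a) (-(2 * cos ξ * sin ξ)) ξ := by
  simpa using ((hasDerivAt_cos ξ).pow 2).add_const a

theorem hasDerivAt_sin_div_sqrt_cos_sq_add (ha : 0 < a) :
    HasDerivAt (fun y => sin y / √(cos y ^ 2 + a))
      (cos ξ * (1 + a) / ((cos ξ ^ 2 + a) * √(cos ξ ^ 2 + a))) ξ := by
  convert (hasDerivAt_sin ξ).div_sqrt (hasDerivAt_cos_sq_add ξ) (cos_sq_add_pos ξ ha) using 2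
  linear_combination (-cos ξ) * sin_sq_add_cos_sq ξ

theorem hasDerivAt_cos_div_sqrt_cos_sq_add (ha : 0 < a) :
    HasDerivAt (fun y => cos y / √(cos y ^ 2 + a))
      (-(sin ξ * a) / ((cos ξ ^ 2 + a) * √(cos ξ ^ 2 + a))) ξ := by
  convert (hasDerivAt_cos ξ).div_sqrt (hasDerivAt_cos_sq_add ξ) (cos_sq_add_pos ξ ha) using 2
  ring

theorem one_add_sq_sin_div_sqrt_cos_sq_add (ha : 0 < a) :
    1 + (sin ξ / √(cos ξ ^ 2 + a)) ^ 2 = (1 + a) / (cos ξ ^ 2 + a) := by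
  have hg := cos_sq_add_pos ξ ha
  rw [div_pow, sq_sqrt hg.le]
  field_simp
  linear_combination sin_sq_add_cos_sq ξ

theorem deriv_sin_div_sqrt_cos_sq_add_div_one_add_sq (ha : 0 < a) :
    deriv (fun y => sin y / √(cos y ^ 2 + a)) ξ / (1 + (sin ξ / √(cos ξ ^ 2 + a)) ^ 2)
      = cos ξ / √(cos ξ ^ 2 + a) := by
  rw [(hasDerivAt_sin_div_sqrt_cos_sq_add ξ ha).deriv, one_add_sq_sin_div_sqrt_cos_sq_add ξ ha]
  field_simp

end CosSqAdd

theorem hasDerivAt_div_sqrt_add_exp_two_mul (c : ℝ) {b : ℝ} (hb : 0 ≤ b) (t : ℝ) :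
    HasDerivAt (fun τ => c / √(b + exp (2 * τ)))
      (-(c * exp (2 * t)) / ((b + exp (2 * t)) * √(b + exp (2 * t)))) t := by
  have hexp : HasDerivAt (fun τ => b + exp (2 * τ)) (exp (2 * t) * 2) t := by
    simpa using ((hasDerivAt_id t).const_mul 2).exp.const_add b
  convert (hasDerivAt_const t c).div_sqrt hexp (by positivity) using 2
  ring

/-- `U(x,t) = sin(x)/√(cos²(x) + e^{2t})` satisfies the nonlinear diffusion equation
`U_t = ∂_x (U_x / (1 + U²))` at every point of `ℝ²`. -/
theorem periodic_slope_solves_diffusion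
    (U : ℝ → ℝ → ℝ)
    (hU : ∀ x t : ℝ, U x t = Real.sin x / Real.sqrt ((Real.cos x) ^ 2 + Real.exp (2 * t)))
    (x t : ℝ) :
    deriv (fun τ => U x τ) t
      = deriv (fun ξ => deriv (fun ξ' => U ξ' t) ξ / (1 + (U ξ t) ^ 2)) x := by
  obtain rfl : U = fun x t => sin x / √(cos x ^ 2 + exp (2 * t)) := funext₂ hU
  simp only [fun ξ => deriv_sin_div_sqrt_cos_sq_add_div_one_add_sq ξ (exp_pos (2 * t))]
  rw [(hasDerivAt_div_sqrt_add_exp_two_mul _ (sq_nonneg _) t).deriv,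
    (hasDerivAt_cos_div_sqrt_cos_sq_add x (exp_pos _)).deriv]
end

section
/- The function y(x,t) = t − ln(cos(x) + √(cos²(x) − e^{2t})), defined on the set {(x,t) : t < 0, cos(x) > e^{t}, |x| < π/2}, satisfies the curve shortening equation y_t = y_xx/(1 + y_x²) at every point of its domain (this is one branch of the shrinking 'Angenent oval'). -/
/-!
With `s = √(cos² x − e^{2t})` the chain rule gives `y_t = cos x / s`, `y_x = sin x / s` and
`y_xx = cos x (1 − e^{2t}) / s³`. Since `s² + sin² x = 1 − e^{2t}`, the factor `1 + y_x²` equals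
`(1 − e^{2t}) / s²`, and both sides of the equation reduce to `cos x / s`.
-/

open Real

noncomputable def angenentOvalBranch (x t : ℝ) : ℝ :=
  t - log (cos x + √(cos x ^ 2 - exp (2 * t)))

theorem hasDerivAt_log_add_sqrt_sq_sub {f g : ℝ → ℝ} {f' g' x : ℝ}
    (hf : HasDerivAt f f' x) (hg : HasDerivAt g g' x) (hpos : 0 < f x) (hlt : g x < f x ^ 2) :
    HasDerivAt (fun ξ => log (f ξ + √(f ξ ^ 2 - g ξ)))
      (f' / √(f x ^ 2 - g x) - g' / (2 * √(f x ^ 2 - g x) * (f x + √(f x ^ 2 - g x)))) x := by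
  have hrad : 0 < f x ^ 2 - g x := sub_pos.mpr hlt
  have hs : 0 < √(f x ^ 2 - g x) := sqrt_pos.mpr hrad
  have hsum : 0 < f x + √(f x ^ 2 - g x) := add_pos hpos hs
  refine ((hf.add ((hf.pow 2).sub hg |>.sqrt hrad.ne')).log hsum.ne').congr_deriv ?_
  simp only [Pi.add_apply, Pi.sub_apply, Pi.pow_apply]
  field_simp
  ring

theorem exp_two_mul_lt_sq_of_exp_lt {t c : ℝ} (h : exp t < c) : exp (2 * t) < c ^ 2 := by
  rw [mul_comm, exp_mul, rpow_two]
  exact pow_lt_pow_left₀ h (exp_pos t).le two_ne_zero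

section

variable {x t : ℝ}

theorem hasDerivAt_angenentOvalBranch_time (h : exp t < cos x) :
    HasDerivAt (angenentOvalBranch x ·) (cos x / √(cos x ^ 2 - exp (2 * t))) t := by
  have hexp : HasDerivAt (fun τ => exp (2 * τ)) (2 * exp (2 * t)) t := by
    simpa [mul_comm] using ((hasDerivAt_id t).const_mul 2).exp
  have hlt := exp_two_mul_lt_sq_of_exp_lt h
  have hs : 0 < √(cos x ^ 2 - exp (2 * t)) := sqrt_pos.mpr (sub_pos.mpr hlt)
  have hsq : √(cos x ^ 2 - exp (2 * t)) ^ 2 = cos x ^ 2 - exp (2 * t) :=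
    sq_sqrt (sub_pos.mpr hlt).le
  have hc : 0 < cos x := (exp_pos t).trans h
  refine ((hasDerivAt_id t).sub
    (hasDerivAt_log_add_sqrt_sq_sub (hasDerivAt_const t (cos x)) hexp hc hlt)).congr_deriv ?_
  field_simp
  linear_combination hsq

theorem hasDerivAt_angenentOvalBranch_space (h : exp t < cos x) :
    HasDerivAt (angenentOvalBranch · t) (sin x / √(cos x ^ 2 - exp (2 * t))) x := by
  refine ((hasDerivAt_const x t).sub (hasDerivAt_log_add_sqrt_sq_sub (hasDerivAt_cos x)
    (hasDerivAt_const x _) ((exp_pos t).trans h) (exp_two_mul_lt_sq_of_exp_lt h))).congr_deriv ?_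
  simp [neg_div]

theorem hasDerivAt_sin_div_sqrt_cos_sq_sub {a : ℝ} (h : a < cos x ^ 2) :
    HasDerivAt (fun ξ => sin ξ / √(cos ξ ^ 2 - a)) (cos x * (1 - a) / √(cos x ^ 2 - a) ^ 3) x := by
  have hrad : 0 < cos x ^ 2 - a := sub_pos.mpr h
  have hs : 0 < √(cos x ^ 2 - a) := sqrt_pos.mpr hrad
  have hsq : √(cos x ^ 2 - a) ^ 2 = cos x ^ 2 - a := sq_sqrt hrad.le
  have hcos : HasDerivAt (fun ξ => cos ξ ^ 2 - a) (2 * cos x * -sin x) x := by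
    simpa using ((hasDerivAt_cos x).pow 2).sub_const a
  refine ((hasDerivAt_sin x).div (hcos.sqrt hrad.ne') hs.ne').congr_deriv ?_
  field_simp
  linear_combination cos x * hsq + cos x * sin_sq_add_cos_sq x

theorem deriv_deriv_angenentOvalBranch_space (h : exp t < cos x) :
    deriv (fun ξ => deriv (angenentOvalBranch · t) ξ) x
      = cos x * (1 - exp (2 * t)) / √(cos x ^ 2 - exp (2 * t)) ^ 3 := by
  have hdomain : ∀ᶠ ξ in nhds x, exp t < cos ξ :=
    (isOpen_lt continuous_const continuous_cos).mem_nhds h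
  have hderiv : (fun ξ => deriv (angenentOvalBranch · t) ξ)
      =ᶠ[nhds x] fun ξ => sin ξ / √(cos ξ ^ 2 - exp (2 * t)) :=
    hdomain.mono fun ξ hξ => (hasDerivAt_angenentOvalBranch_space hξ).deriv
  rw [hderiv.deriv_eq]
  exact (hasDerivAt_sin_div_sqrt_cos_sq_sub (exp_two_mul_lt_sq_of_exp_lt h)).deriv

end

theorem angenent_oval_branch_solves_CSE_general
    (y : ℝ → ℝ → ℝ)
    (hy : ∀ x t : ℝ, y x t
      = t - Real.log (Real.cos x + Real.sqrt ((Real.cos x) ^ 2 - Real.exp (2 * t))))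
    (x t : ℝ) (hcos : Real.exp t < Real.cos x) :
    deriv (fun τ => y x τ) t
      = deriv (fun ξ => deriv (fun ξ' => y ξ' t) ξ) x
        / (1 + (deriv (fun ξ => y ξ t) x) ^ 2) := by
  obtain rfl : y = angenentOvalBranch := funext₂ hy
  rw [(hasDerivAt_angenentOvalBranch_time hcos).deriv, deriv_deriv_angenentOvalBranch_space hcos,
    (hasDerivAt_angenentOvalBranch_space hcos).deriv]
  set a := exp (2 * t)
  have hlt : a < cos x ^ 2 := exp_two_mul_lt_sq_of_exp_lt hcos
  have hs : 0 < √(cos x ^ 2 - a) := sqrt_pos.mpr (sub_pos.mpr hlt)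
  have hsq : √(cos x ^ 2 - a) ^ 2 = cos x ^ 2 - a := sq_sqrt (sub_pos.mpr hlt).le
  field_simp
  linear_combination cos x * hsq + cos x * sin_sq x

/-- One branch of the shrinking 'Angenent oval',
`y(x,t) = t − ln(cos(x) + √(cos²(x) − e^{2t}))`, satisfies the curve shortening
equation `y_t = y_xx / (1 + y_x²)` on the set
`{(x,t) : t < 0, cos(x) > e^t, |x| < π/2}`. -/
theorem angenent_oval_branch_solves_CSE
    (y : ℝ → ℝ → ℝ)
    (hy : ∀ x t : ℝ, y x t
      = t - Real.log (Real.cos x + Real.sqrt ((Real.cos x) ^ 2 - Real.exp (2 * t))))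
    (x t : ℝ) (ht : t < 0) (hcos : Real.exp t < Real.cos x) (hx : |x| < Real.pi / 2) :
    deriv (fun τ => y x τ) t
      = deriv (fun ξ => deriv (fun ξ' => y ξ' t) ξ) x
        / (1 + (deriv (fun ξ => y ξ t) x) ^ 2) :=
  angenent_oval_branch_solves_CSE_general y hy x t hcos
end

section
/- For t < 0 define the eccentricity ε(t) = √(1 − (arccos(e^{t})/arcosh(e^{−t}))²), where arccos(e^{t}) and arcosh(e^{−t}) are the semi-axis lengths of the oval cosh(y) = e^{−t}·cos(x). Then lim_{t→0⁻} ε(t)/√(−t) = √(2/3); in particular ε(t) → 0 as t → 0⁻, so the oval approaches circularity at extinction. -/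
/-!
Put `a = arccos (e^t) ∈ (0, π/2)`. Then `-t = -log (cos a)` and `arcosh (e^{-t}) = L a`, where
`L a = log ((1 + sin a) / cos a)` is the inverse Gudermannian function, so
`ε(t)² / (-t) = (L a - a) (L a + a) / (L a ^ 2 · (-log (cos a)))`. Since `L' = sec`,
L'Hôpital's rule gives `L a = a + a³/6 + o(a³)`, and `-log (cos a) = a²/2 + o(a²)`; hence the
quotient tends to `(a³/6 · 2a) / (a² · a²/2) = 2/3`.
-/

/-- Inverse hyperbolic cosine: `arcosh y = ln(y + √(y² − 1))` (for `y ≥ 1`). -/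
noncomputable def arcosh (y : ℝ) : ℝ := Real.log (y + Real.sqrt (y ^ 2 - 1))

/-- Eccentricity `ε(t) = √(1 − (arccos(e^t)/arcosh(e^{−t}))²)` of the Angenent oval. -/
noncomputable def ovalEccentricity (t : ℝ) : ℝ :=
  Real.sqrt (1 - (Real.arccos (Real.exp t) / arcosh (Real.exp (-t))) ^ 2)

open Real hiding arcosh
open Filter Set Topology

lemma tendsto_one_sub_cos_div_sq :
    Tendsto (fun x => (1 - cos x) / x ^ 2) (𝓝[≠] 0) (𝓝 (1 / 2)) := by
  have h : Tendsto (fun x => sinc (x / 2) ^ 2 / 2) (𝓝 0) (𝓝 (1 / 2)) := by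
    simpa [sinc_zero] using
      (((continuous_sinc.comp (continuous_id.div_const 2)).pow 2).div_const 2).tendsto 0
  refine (h.mono_left nhdsWithin_le_nhds).congr' ?_
  filter_upwards [self_mem_nhdsWithin] with x (hx : x ≠ 0)
  rw [sinc_of_ne_zero (div_ne_zero hx two_ne_zero),
    show cos x = 1 - 2 * sin (x / 2) ^ 2 by rw [← cos_two_mul_eq_one_sub]; ring_nf]
  field_simp
  ring

lemma tendsto_neg_log_cos_div_sq :
    Tendsto (fun x => -log (cos x) / x ^ 2) (𝓝[≠] 0) (𝓝 (1 / 2)) := by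
  have hslope : Tendsto (fun x => dslope log 1 (cos x)) (𝓝 0) (𝓝 1) := by
    have h := (continuousAt_dslope_same.2 (differentiableAt_log one_ne_zero)).tendsto.comp
      (continuous_cos.tendsto' 0 1 cos_zero)
    simpa [Function.comp_def, dslope_same] using h
  have h := (hslope.mono_left nhdsWithin_le_nhds).mul tendsto_one_sub_cos_div_sq
  rw [one_mul] at h
  refine h.congr fun x => ?_
  -- `log (cos x) = (cos x - 1) * dslope log 1 (cos x)` holds also where `cos x = 1`
  have h := sub_smul_dslope log 1 (cos x)
  rw [smul_eq_mul, log_one, sub_zero] at h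
  rw [← h]
  ring

noncomputable def invGudermannian (x : ℝ) : ℝ := log (1 + sin x) - log (cos x)

lemma hasDerivAt_invGudermannian {x : ℝ} (hx : 0 < cos x) :
    HasDerivAt invGudermannian (cos x)⁻¹ x := by
  have hs : 1 + sin x ≠ 0 := by nlinarith [sin_sq_add_cos_sq x]
  refine ((((hasDerivAt_sin x).const_add 1).log hs).sub
    ((hasDerivAt_cos x).log hx.ne')).congr_deriv ?_
  field_simp
  nlinarith [sin_sq_add_cos_sq x]

lemma invGudermannian_zero : invGudermannian 0 = 0 := by simp [invGudermannian]

lemma tendsto_invGudermannian_div_self :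
    Tendsto (fun x => invGudermannian x / x) (𝓝[≠] 0) (𝓝 1) := by
  have h := (hasDerivAt_invGudermannian (x := 0) (by simp)).tendsto_slope
  rw [cos_zero, inv_one] at h
  exact h.congr fun x => by simp [slope_def_field, invGudermannian_zero]

lemma tendsto_invGudermannian_sub_self_div_cube :
    Tendsto (fun x => (invGudermannian x - x) / x ^ 3) (𝓝[≠] 0) (𝓝 (1 / 6)) := by
  have hcos : ∀ᶠ x in 𝓝 (0 : ℝ), 0 < cos x :=
    (continuous_cos.tendsto' 0 1 cos_zero).eventually (lt_mem_nhds one_pos)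
  refine HasDerivAt.lhopital_zero_nhdsNE (f' := fun x => (cos x)⁻¹ - 1)
    (g' := fun x => 3 * x ^ 2) ?_ ?_ ?_ ?_ ?_ ?_
  · filter_upwards [nhdsWithin_le_nhds hcos] with x hx
    exact (hasDerivAt_invGudermannian hx).sub (hasDerivAt_id x)
  · filter_upwards with x
    simpa using hasDerivAt_pow 3 x
  · filter_upwards [self_mem_nhdsWithin] with x (hx : x ≠ 0)
    positivity
  · have h := (hasDerivAt_invGudermannian (x := 0) (by simp)).continuousAt.tendsto.sub
      (tendsto_id (x := 𝓝 0))
    simpa [invGudermannian_zero] using h.mono_left nhdsWithin_le_nhds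
  · exact ((continuous_pow 3).tendsto' 0 0 (by simp)).mono_left nhdsWithin_le_nhds
  · have hsec : Tendsto (fun x => (3 * cos x)⁻¹) (𝓝 0) (𝓝 (1 / 3)) := by
      simpa using ((continuous_cos.tendsto' 0 1 cos_zero).const_mul 3).inv₀ (by norm_num)
    have h := tendsto_one_sub_cos_div_sq.mul (hsec.mono_left nhdsWithin_le_nhds)
    norm_num at h
    refine h.congr' ?_
    filter_upwards [self_mem_nhdsWithin, nhdsWithin_le_nhds hcos] with x (hx : x ≠ 0) hx'
    field_simp

lemma tendsto_one_sub_div_invGudermannian_sq_div_neg_log_cos :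
    Tendsto (fun x => (1 - (x / invGudermannian x) ^ 2) / -log (cos x)) (𝓝[≠] 0)
      (𝓝 (2 / 3)) := by
  have hL := tendsto_invGudermannian_div_self
  have h := ((tendsto_invGudermannian_sub_self_div_cube.mul (hL.add_const 1)).mul
    ((hL.inv₀ one_ne_zero).pow 2)).mul (tendsto_neg_log_cos_div_sq.inv₀ (by norm_num))
  norm_num at h
  refine h.congr' ?_
  filter_upwards [self_mem_nhdsWithin, hL.eventually_ne one_ne_zero] with x (hx : x ≠ 0) hratio
  have hLx : invGudermannian x ≠ 0 := (div_ne_zero_iff.1 hratio).1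
  field_simp
  ring

lemma invGudermannian_arccos {x : ℝ} (h0 : 0 < x) (h1 : x ≤ 1) :
    invGudermannian (arccos x) = arcosh x⁻¹ := by
  rw [invGudermannian, arcosh, cos_arccos (by linarith) h1, sin_arccos,
    show x⁻¹ ^ 2 - 1 = (1 - x ^ 2) / x ^ 2 by field_simp, sqrt_div' _ (sq_nonneg x),
    sqrt_sq h0.le, ← log_div (by positivity) h0.ne']
  congr 1
  field_simp

lemma ovalEccentricity_div_sqrt_neg {t : ℝ} (ht : t < 0) :
    ovalEccentricity t / √(-t) =
      √((1 - (arccos (exp t) / invGudermannian (arccos (exp t))) ^ 2) /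
        -log (cos (arccos (exp t)))) := by
  rw [ovalEccentricity, invGudermannian_arccos (exp_pos t) (exp_lt_one_iff.2 ht).le, exp_neg,
    cos_arccos (by linarith [exp_pos t]) (exp_lt_one_iff.2 ht).le, log_exp,
    sqrt_div' _ (by linarith)]

lemma tendsto_arccos_exp_nhdsLT_zero :
    Tendsto (fun t => arccos (exp t)) (𝓝[<] 0) (𝓝[>] 0) := by
  refine tendsto_nhdsWithin_of_tendsto_nhds_of_eventually_within _ ?_ ?_
  · exact ((continuous_arccos.comp continuous_exp).tendsto' 0 0 (by simp)).mono_left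
      nhdsWithin_le_nhds
  · filter_upwards [self_mem_nhdsWithin] with t (ht : t < 0)
    exact arccos_pos.2 (exp_lt_one_iff.2 ht)

/-- As `t → 0⁻`, the eccentricity of the Angenent oval satisfies
`ε(t)/√(−t) → √(2/3)`; in particular `ε(t) → 0`, so the oval approaches
circularity at extinction. -/
theorem oval_eccentricity_asymptotics :
    Filter.Tendsto (fun t : ℝ => ovalEccentricity t / Real.sqrt (-t))
      (nhdsWithin 0 (Set.Iio 0)) (nhds (Real.sqrt (2 / 3))) ∧
    Filter.Tendsto ovalEccentricity (nhdsWithin 0 (Set.Iio 0)) (nhds 0) := by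
  have hratio := (continuous_sqrt.tendsto _).comp
    (tendsto_one_sub_div_invGudermannian_sq_div_neg_log_cos.comp
      (tendsto_arccos_exp_nhdsLT_zero.mono_right (nhdsGT_le_nhdsNE 0)))
  have h1 : Tendsto (fun t => ovalEccentricity t / √(-t)) (𝓝[<] 0) (𝓝 √(2 / 3)) := by
    refine hratio.congr' ?_
    filter_upwards [self_mem_nhdsWithin] with t (ht : t < 0)
    exact (ovalEccentricity_div_sqrt_neg ht).symm
  refine ⟨h1, ?_⟩
  have hsqrt : Tendsto (fun t => √(-t)) (𝓝[<] 0) (𝓝 0) :=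
    ((continuous_sqrt.comp continuous_neg).tendsto' 0 0 (by simp)).mono_left nhdsWithin_le_nhds
  have h := h1.mul hsqrt
  rw [mul_zero] at h
  refine h.congr' ?_
  filter_upwards [self_mem_nhdsWithin] with t (ht : t < 0)
  exact div_mul_cancel₀ _ (sqrt_pos.2 (neg_pos.2 ht)).ne'
end

section
/- Let t < 0 and let y(x,t) = t − ln(cos(x) + √(cos²(x) − e^{2t})) be defined for cos(x) > e^{t}, |x| < π/2. Then the signed curvature of its graph satisfies y_xx/(1 + y_x²)^{3/2} = e^{−t}·cos(x)/√(e^{−2t} − 1) at every point of the domain. -/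
/-!
With `a = e^{2t}` and `s = √(cos²x − a)`, differentiating gives `y_x = sin x / s` and
`y_xx = cos x · (1 − a) / s³`, while `1 + y_x² = (1 − a) / s²` because `sin² + cos² = 1`.
Hence the curvature is `cos x / √(1 − a)`, and `e^{−t} / √(e^{−2t} − 1) = 1 / √(1 − e^{2t})`.
-/

open Real Filter Topology

namespace AngenentOval

variable {a ξ : ℝ}

lemma exp_two_mul_lt_cos_sq {t : ℝ} (h : exp t < cos ξ) : exp (2 * t) < cos ξ ^ 2 := by
  rw [mul_comm, exp_mul, rpow_two]
  exact pow_lt_pow_left₀ h (exp_pos t).le two_ne_zero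

lemma hasDerivAt_cos_sq_sub_sqrt (ha : a < cos ξ ^ 2) :
    HasDerivAt (fun ξ => √(cos ξ ^ 2 - a)) (-(cos ξ * sin ξ) / √(cos ξ ^ 2 - a)) ξ := by
  refine ((((hasDerivAt_cos ξ).fun_pow 2).sub_const a).sqrt (sub_pos.2 ha).ne').congr_deriv ?_
  field_simp
  ring

lemma hasDerivAt_log_cos_add_sqrt (hc : 0 < cos ξ) (ha : a < cos ξ ^ 2) :
    HasDerivAt (fun ξ => log (cos ξ + √(cos ξ ^ 2 - a))) (-(sin ξ / √(cos ξ ^ 2 - a))) ξ := by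
  have hs : 0 < √(cos ξ ^ 2 - a) := sqrt_pos.2 (sub_pos.2 ha)
  have hpos : 0 < cos ξ + √(cos ξ ^ 2 - a) := by positivity
  refine (((hasDerivAt_cos ξ).fun_add (hasDerivAt_cos_sq_sub_sqrt ha)).log hpos.ne').congr_deriv ?_
  field_simp
  ring

lemma hasDerivAt_sin_div_sqrt (ha : a < cos ξ ^ 2) :
    HasDerivAt (fun ξ => sin ξ / √(cos ξ ^ 2 - a))
      (cos ξ * (1 - a) / √(cos ξ ^ 2 - a) ^ 3) ξ := by
  have hs : 0 < √(cos ξ ^ 2 - a) := sqrt_pos.2 (sub_pos.2 ha)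
  have hs2 : √(cos ξ ^ 2 - a) ^ 2 = cos ξ ^ 2 - a := sq_sqrt (sub_pos.2 ha).le
  refine ((hasDerivAt_sin ξ).fun_div (hasDerivAt_cos_sq_sub_sqrt ha) hs.ne').congr_deriv ?_
  field_simp
  linear_combination cos ξ * hs2 + cos ξ * sin_sq_add_cos_sq ξ

lemma one_add_sin_div_sqrt_sq (ha : a < cos ξ ^ 2) :
    1 + (sin ξ / √(cos ξ ^ 2 - a)) ^ 2 = (1 - a) / √(cos ξ ^ 2 - a) ^ 2 := by
  have hs : 0 < √(cos ξ ^ 2 - a) := sqrt_pos.2 (sub_pos.2 ha)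
  have hs2 : √(cos ξ ^ 2 - a) ^ 2 = cos ξ ^ 2 - a := sq_sqrt (sub_pos.2 ha).le
  field_simp
  linear_combination hs2 + sin_sq_add_cos_sq ξ

end AngenentOval

lemma div_div_rpow_three_halves {b s : ℝ} (c : ℝ) (hb : 0 < b) (hs : 0 < s) :
    c * b / s ^ 3 / (b / s ^ 2) ^ ((3 : ℝ) / 2) = c / √b := by
  have hpow : (b / s ^ 2) ^ ((3 : ℝ) / 2) = b * √b / s ^ 3 := by
    rw [show (3 : ℝ) / 2 = 1 + 1 / 2 by norm_num, rpow_add (by positivity), rpow_one,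
      ← sqrt_eq_rpow, sqrt_div' _ (sq_nonneg s), sqrt_sq hs.le]
    ring
  have hsb : 0 < √b := sqrt_pos.2 hb
  rw [hpow]
  field_simp

lemma exp_neg_mul_div_sqrt_exp_neg_two_mul_sub_one (t c : ℝ) :
    exp (-t) * c / √(exp (-2 * t) - 1) = c / √(1 - exp (2 * t)) := by
  have h : exp (-2 * t) - 1 = exp (-t) ^ 2 * (1 - exp (2 * t)) := by
    rw [mul_sub, mul_one, ← exp_nat_mul, ← exp_add]
    norm_num
  rw [h, sqrt_mul (sq_nonneg _), sqrt_sq (exp_pos _).le, mul_div_mul_left _ _ (exp_pos _).ne']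

open AngenentOval in
theorem angenent_oval_curvature_general
    (y : ℝ → ℝ → ℝ)
    (hy : ∀ x t : ℝ, y x t
      = t - Real.log (Real.cos x + Real.sqrt ((Real.cos x) ^ 2 - Real.exp (2 * t))))
    (t : ℝ)
    (x : ℝ) (hcos : Real.exp t < Real.cos x) :
    deriv (fun ξ => deriv (fun ξ' => y ξ' t) ξ) x
        / (1 + (deriv (fun ξ => y ξ t) x) ^ 2) ^ ((3 : ℝ) / 2)
      = Real.exp (-t) * Real.cos x / Real.sqrt (Real.exp (-2 * t) - 1) := by
  have hslope : ∀ ξ, exp t < cos ξ →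
      deriv (fun ξ' => y ξ' t) ξ = sin ξ / √(cos ξ ^ 2 - exp (2 * t)) := fun ξ hξ => by
    simp only [hy]
    simpa using ((hasDerivAt_log_cos_add_sqrt ((exp_pos t).trans hξ)
      (exp_two_mul_lt_cos_sq hξ)).const_sub t).deriv
  have hnear : ∀ᶠ ξ in 𝓝 x, exp t < cos ξ :=
    (isOpen_lt continuous_const continuous_cos).eventually_mem hcos
  have ha := exp_two_mul_lt_cos_sq hcos
  rw [(eventuallyEq_of_mem hnear hslope).deriv_eq, hslope x hcos,
    (hasDerivAt_sin_div_sqrt ha).deriv, one_add_sin_div_sqrt_sq ha,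
    div_div_rpow_three_halves _ (by linarith [cos_sq_le_one x]) (sqrt_pos.2 (sub_pos.2 ha)),
    exp_neg_mul_div_sqrt_exp_neg_two_mul_sub_one]

/-- The curvature `y_xx/(1 + y_x²)^{3/2}` of the graph of the Angenent-oval branch
`y(x,t) = t − ln(cos x + √(cos²x − e^{2t}))` equals `e^{−t}·cos x/√(e^{−2t} − 1)`
at every point of its domain. -/
theorem angenent_oval_curvature
    (y : ℝ → ℝ → ℝ)
    (hy : ∀ x t : ℝ, y x t
      = t - Real.log (Real.cos x + Real.sqrt ((Real.cos x) ^ 2 - Real.exp (2 * t))))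
    (t : ℝ) (ht : t < 0)
    (x : ℝ) (hcos : Real.exp t < Real.cos x) (hx : |x| < Real.pi / 2) :
    deriv (fun ξ => deriv (fun ξ' => y ξ' t) ξ) x
        / (1 + (deriv (fun ξ => y ξ t) x) ^ 2) ^ ((3 : ℝ) / 2)
      = Real.exp (-t) * Real.cos x / Real.sqrt (Real.exp (-2 * t) - 1) :=
  angenent_oval_curvature_general y hy t x hcos
end

section
/- Let K ≠ 0, X₀, τ₀ be real constants. The function Y(X,τ) = (1/K)·ln( (√(exp(2K²(τ−τ₀)) + cos²(K(X−X₀))) + cos(K(X−X₀))) · exp(−K²(τ−τ₀)) ), defined for all (X,τ) ∈ ℝ², satisfies the curve shortening (Mullins) equation Y_τ = Y_XX/(1 + Y_X²) at every point of ℝ². -/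
/-!
Since `(√(e^{2t} + c²) + c)·e^{-t} = √(1 + w²) + w` with `w = e^{-t} c`, the solution is
`Y = arsinh(w)/K` for the separable heat mode `w = e^{-K²(τ-τ₀)} cos(K(X-X₀))`, which satisfies
`w_τ = w_XX = -K² w`. For `Y = arsinh(w)/K` the Mullins equation is equivalent to
`K² (w_XX (1 + w²) - w w_X²) = w_τ (K² (1 + w²) + w_X²)`, and both sides equal
`-K² w (K² (1 + w²) + w_X²)` for such a `w`.
-/

open Real

def SolvesCurveShortening (Y : ℝ → ℝ → ℝ) : Prop :=
  ∀ X τ, deriv (fun s => Y X s) τ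
    = deriv (fun ξ => deriv (fun ξ' => Y ξ' τ) ξ) X / (1 + deriv (fun ξ => Y ξ τ) X ^ 2)

theorem log_sqrt_exp_add_mul_exp_neg_eq_arsinh (t c : ℝ) :
    log ((√(exp (2 * t) + c ^ 2) + c) * exp (-t)) = arsinh (exp (-t) * c) := by
  have hexp : exp (2 * t) * exp (-t) ^ 2 = 1 := by
    rw [← exp_nat_mul, ← exp_add]; norm_num
  have hsqrt : √(exp (2 * t) + c ^ 2) * exp (-t) = √(1 + (exp (-t) * c) ^ 2) := by
    have hrad : 1 + (exp (-t) * c) ^ 2 = (exp (2 * t) + c ^ 2) * exp (-t) ^ 2 := by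
      linear_combination -hexp
    rw [hrad, sqrt_mul' _ (sq_nonneg _), sqrt_sq (exp_pos _).le]
  rw [arsinh, add_mul, hsqrt, mul_comm c, add_comm]

section Derivatives

variable {f : ℝ → ℝ} {f' x : ℝ}

theorem HasDerivAt.arsinh_div_const (hf : HasDerivAt f f' x) (K : ℝ) :
    HasDerivAt (fun y => Real.arsinh (f y) / K) (f' / (K * √(1 + f x ^ 2))) x :=
  hf.arsinh.div_const K |>.congr_deriv (by rw [smul_eq_mul]; field_simp)

theorem HasDerivAt.sqrt_one_add_sq (hf : HasDerivAt f f' x) :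
    HasDerivAt (fun y => √(1 + f y ^ 2)) (f x * f' / √(1 + f x ^ 2)) x :=
  ((hf.fun_pow 2).const_add 1).sqrt (by positivity) |>.congr_deriv (by field_simp; ring)

theorem hasDerivAt_mul_sub_const (a b x : ℝ) : HasDerivAt (fun y => a * (y - b)) a x := by
  simpa using ((hasDerivAt_id x).sub_const b).const_mul a

end Derivatives

theorem solvesCurveShortening_arsinh_div {K : ℝ} {w wX : ℝ → ℝ → ℝ} (hK : K ≠ 0)
    (hX : ∀ X τ, HasDerivAt (fun ξ => w ξ τ) (wX X τ) X)
    (hXX : ∀ X τ, HasDerivAt (fun ξ => wX ξ τ) (-K ^ 2 * w X τ) X)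
    (hτ : ∀ X τ, HasDerivAt (fun s => w X s) (-K ^ 2 * w X τ) τ) :
    SolvesCurveShortening (fun X τ => arsinh (w X τ) / K) := by
  intro X τ
  dsimp only
  have hYX (ξ : ℝ) := (hX ξ τ).arsinh_div_const K
  have hYXX := (hXX X τ).fun_div ((hX X τ).sqrt_one_add_sq.const_mul K)
    (mul_ne_zero hK (by positivity))
  rw [funext fun ξ => (hYX ξ).deriv, hYXX.deriv, ((hτ X τ).arsinh_div_const K).deriv]
  field_simp
  ring

section HeatMode

variable (K X₀ τ₀ : ℝ)

theorem hasDerivAt_exp_mul_cos (X τ : ℝ) :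
    HasDerivAt (fun ξ => exp (-K ^ 2 * (τ - τ₀)) * cos (K * (ξ - X₀)))
      (-K * exp (-K ^ 2 * (τ - τ₀)) * sin (K * (X - X₀))) X :=
  ((hasDerivAt_mul_sub_const K X₀ X).cos.const_mul _).congr_deriv (by ring)

theorem hasDerivAt_neg_mul_exp_mul_sin (X τ : ℝ) :
    HasDerivAt (fun ξ => -K * exp (-K ^ 2 * (τ - τ₀)) * sin (K * (ξ - X₀)))
      (-K ^ 2 * (exp (-K ^ 2 * (τ - τ₀)) * cos (K * (X - X₀)))) X :=
  ((hasDerivAt_mul_sub_const K X₀ X).sin.const_mul _).congr_deriv (by ring)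

theorem hasDerivAt_exp_mul_cos_time (X τ : ℝ) :
    HasDerivAt (fun s => exp (-K ^ 2 * (s - τ₀)) * cos (K * (X - X₀)))
      (-K ^ 2 * (exp (-K ^ 2 * (τ - τ₀)) * cos (K * (X - X₀)))) τ :=
  ((hasDerivAt_mul_sub_const (-K ^ 2) τ₀ τ).exp.mul_const _).congr_deriv (by ring)

end HeatMode

/-- The spatially periodic exact solution
`Y(X,τ) = (1/K)·ln( (√(e^{2K²(τ−τ₀)} + cos²(K(X−X₀))) + cos(K(X−X₀)))·e^{−K²(τ−τ₀)} )`
satisfies the curve shortening (Mullins) equation `Y_τ = Y_XX/(1 + Y_X²)`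
at every point of `ℝ²`. -/
theorem periodic_solution_solves_Mullins (K X₀ τ₀ : ℝ) (hK : K ≠ 0)
    (Y : ℝ → ℝ → ℝ)
    (hY : ∀ X τ : ℝ, Y X τ
      = (1 / K) * Real.log
          ((Real.sqrt (Real.exp (2 * K ^ 2 * (τ - τ₀)) + (Real.cos (K * (X - X₀))) ^ 2)
              + Real.cos (K * (X - X₀)))
            * Real.exp (-(K ^ 2) * (τ - τ₀))))
    (X τ : ℝ) :
    deriv (fun s => Y X s) τ
      = deriv (fun ξ => deriv (fun ξ' => Y ξ' τ) ξ) X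
        / (1 + (deriv (fun ξ => Y ξ τ) X) ^ 2) := by
  have hY_arsinh : Y = fun X τ => arsinh (exp (-K ^ 2 * (τ - τ₀)) * cos (K * (X - X₀))) / K := by
    funext x t
    rw [hY, mul_assoc 2, neg_mul, log_sqrt_exp_add_mul_exp_neg_eq_arsinh, one_div_mul_eq_div]
  subst hY_arsinh
  exact solvesCurveShortening_arsinh_div hK (hasDerivAt_exp_mul_cos K X₀ τ₀)
    (hasDerivAt_neg_mul_exp_mul_sin K X₀ τ₀) (hasDerivAt_exp_mul_cos_time K X₀ τ₀) X τ
end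

section
/- Let K > 0 and τ₀ ∈ ℝ, and define the amplitude Y_max(τ) = (1/K)·ln( (√(exp(2K²(τ−τ₀)) + 1) + 1)·exp(−K²(τ−τ₀)) ). Then lim_{τ→−∞} [ Y_max(τ) − K(τ₀ − τ) − (ln 2)/K ] = 0; that is, at early times the amplitude of the periodic solution decreases linearly in time with slope −K, up to an exponentially small error. -/
/-!
Taking the logarithm of the product splits off `-K²(τ - τ₀)`, which after division by `K`
cancels the linear term `K(τ₀ - τ)`. What remains is `(log (√(e^{2K²(τ-τ₀)} + 1) + 1) - log 2) / K`,
which tends to `0` because the exponential does and `√(0 + 1) + 1 = 2`.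
-/

open Filter Topology Real

lemma tendsto_log_sqrt_add_one_add_one :
    Tendsto (fun x : ℝ => log (√(x + 1) + 1)) (𝓝 0) (𝓝 (log 2)) := by
  have hcont : ContinuousAt (fun x : ℝ => log (√(x + 1) + 1)) 0 := by
    fun_prop (disch := positivity)
  simpa [one_add_one_eq_two] using hcont.tendsto

lemma one_div_mul_log_mul_exp_neg_sq_mul (K t : ℝ) {s : ℝ} (hs : s ≠ 0) :
    1 / K * log (s * exp (-(K ^ 2) * t)) = log s / K - K * t := by
  have hK : K⁻¹ * K ^ 2 = K := by rw [sq, ← mul_assoc, inv_mul_mul_self]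
  rw [log_mul hs (exp_ne_zero _), log_exp]
  linear_combination (-t) * hK

/-- Early-time behaviour of the amplitude
`Y_max(τ) = (1/K)·ln((√(e^{2K²(τ−τ₀)} + 1) + 1)·e^{−K²(τ−τ₀)})` of the periodic
solution of the curve shortening equation: as `τ → −∞`,
`Y_max(τ) − K(τ₀ − τ) − (ln 2)/K → 0`, i.e. the amplitude decreases linearly in
time with slope `−K` up to an exponentially small error. -/
theorem periodic_solution_amplitude_early_times (K τ₀ : ℝ) (hK : 0 < K) :
    Filter.Tendsto
      (fun τ : ℝ =>
        (1 / K) * Real.log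
            ((Real.sqrt (Real.exp (2 * K ^ 2 * (τ - τ₀)) + 1) + 1)
              * Real.exp (-(K ^ 2) * (τ - τ₀)))
          - K * (τ₀ - τ) - Real.log 2 / K)
      Filter.atBot (nhds 0) := by
  have hexp : Tendsto (fun τ => exp (2 * K ^ 2 * (τ - τ₀))) atBot (𝓝 0) :=
    tendsto_exp_comp_nhds_zero.mpr <|
      (tendsto_atBot_add_const_right _ (-τ₀) tendsto_id).const_mul_atBot (by positivity)
  have hlim := ((tendsto_log_sqrt_add_one_add_one.comp hexp).sub_const (log 2)).div_const K
  rw [sub_self, zero_div] at hlim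
  refine hlim.congr fun τ => ?_
  rw [one_div_mul_log_mul_exp_neg_sq_mul _ _ (by positivity)]
  simp only [Function.comp_apply]
  ring
end

section
/- Let K > 0 and τ₀ ∈ ℝ, and let Y(X,τ) = (1/K)·ln( (√(exp(2K²(τ−τ₀)) + sin²(KX)) + sin(KX))·exp(−K²(τ−τ₀)) ). Then for every fixed X ∈ ℝ, lim_{τ→+∞} exp(K²(τ−τ₀))·Y(X,τ) = sin(KX)/K; that is, at large times the solution is approximated by an exponentially decaying single sine wave. -/
/-!
With `a = exp (K² (τ - τ₀))` and `s = sin (K X)`, the argument of the logarithm is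
`(√(a² + s²) + s) / a`, so `K · Y X τ = arsinh (s / a)`. Since `arsinh` is differentiable at `0`
with derivative `1`, `a · arsinh (s / a) → s` as `a → ∞`.
-/

open Real Filter Topology

theorem Real.log_sqrt_sq_add_sq_add_div {a : ℝ} (ha : 0 < a) (s : ℝ) :
    log ((√(a ^ 2 + s ^ 2) + s) / a) = arsinh (s / a) := by
  have hsqrt : √(1 + (s / a) ^ 2) = √(a ^ 2 + s ^ 2) / a := by
    rw [← sqrt_sq ha.le, ← sqrt_div' _ (sq_nonneg a), sqrt_sq ha.le]
    congr 1
    field_simp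
  rw [arsinh, hsqrt]
  ring_nf

theorem Real.arsinh_eq_mul_dslope (x : ℝ) : arsinh x = x * dslope arsinh 0 x := by
  rcases eq_or_ne x 0 with rfl | hx
  · simp
  · rw [dslope_of_ne _ hx, slope_def_field, arsinh_zero]
    field_simp
    ring

theorem Real.tendsto_mul_arsinh_div_atTop (s : ℝ) :
    Tendsto (fun a => a * arsinh (s / a)) atTop (𝓝 s) := by
  have hderiv : dslope arsinh 0 0 = 1 := by
    rw [dslope_same, (hasDerivAt_arsinh 0).deriv]
    simp
  have hcont : ContinuousAt (dslope arsinh 0) 0 :=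
    continuousAt_dslope_same.mpr differentiable_arsinh.differentiableAt
  have hquot : Tendsto (fun a : ℝ => s / a) atTop (𝓝 0) := by
    simpa [div_eq_mul_inv] using tendsto_inv_atTop_zero.const_mul s
  have hlim := (hcont.tendsto.comp hquot).const_mul s
  rw [hderiv, mul_one] at hlim
  refine hlim.congr' ((eventually_ne_atTop 0).mono fun a ha => ?_)
  simp only [Function.comp_apply, arsinh_eq_mul_dslope (s / a)]
  field_simp

/-- Large-time behaviour of the periodic solution
`Y(X,τ) = (1/K)·ln((√(e^{2K²(τ−τ₀)} + sin²(KX)) + sin(KX))·e^{−K²(τ−τ₀)})` of the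
curve shortening equation: for each fixed `X`,
`e^{K²(τ−τ₀)}·Y(X,τ) → sin(KX)/K` as `τ → +∞`, i.e. the solution is approximated
by an exponentially decaying single sine wave. -/
theorem periodic_solution_late_times (K τ₀ : ℝ) (hK : 0 < K)
    (Y : ℝ → ℝ → ℝ)
    (hY : ∀ X τ : ℝ, Y X τ
      = (1 / K) * Real.log
          ((Real.sqrt (Real.exp (2 * K ^ 2 * (τ - τ₀)) + (Real.sin (K * X)) ^ 2)
              + Real.sin (K * X))
            * Real.exp (-(K ^ 2) * (τ - τ₀))))
    (X : ℝ) :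
    Filter.Tendsto (fun τ : ℝ => Real.exp (K ^ 2 * (τ - τ₀)) * Y X τ)
      Filter.atTop (nhds (Real.sin (K * X) / K)) := by
  set a : ℝ → ℝ := fun τ => exp (K ^ 2 * (τ - τ₀))
  have ha : Tendsto a atTop atTop :=
    tendsto_exp_atTop.comp <|
      (tendsto_atTop_add_const_right _ (-τ₀) tendsto_id).const_mul_atTop (by positivity)
  have hform : ∀ τ, exp (K ^ 2 * (τ - τ₀)) * Y X τ = a τ * arsinh (sin (K * X) / a τ) / K := by
    intro τ
    have hsq : exp (2 * K ^ 2 * (τ - τ₀)) = a τ ^ 2 := by rw [← exp_nat_mul]; ring_nf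
    have hinv : exp (-(K ^ 2) * (τ - τ₀)) = (a τ)⁻¹ := by rw [← exp_neg]; ring_nf
    rw [hY, hsq, hinv, ← div_eq_mul_inv, log_sqrt_sq_add_sq_add_div (exp_pos _)]
    ring
  simp_rw [hform]
  exact ((tendsto_mul_arsinh_div_atTop _).comp ha).div_const K
end

section
/- Let D : ℝ → ℝ be continuous, let α ∈ ℝ, and let y(x,t) be a C² solution of the anisotropic diffusion equation y_t = D(y_x)·y_xx on an open set Ω ⊆ ℝ², with cos(α) + y_x(x,t)·sin(α) > 0 on Ω. Let ȳ be a C² function satisfying ȳ(x·cos(α) − y(x,t)·sin(α), t) = x·sin(α) + y(x,t)·cos(α) for all (x,t) ∈ Ω (i.e., the graph of ȳ(·,t) is the rotation by angle α of the graph of y(·,t)). Then at every point (x̄, t) of the form x̄ = x·cos(α) − y(x,t)·sin(α) with (x,t) ∈ Ω, ȳ satisfies ȳ_t = D̄(ȳ_x̄)·ȳ_x̄x̄, where D̄(s) = D( (s·cos(α) − sin(α)) / (s·sin(α) + cos(α)) ) / (s·sin(α) + cos(α))². -/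
/-!
Along a time slice, differentiating the rotation identity
`ȳ(x cos α - y sin α) = x sin α + y cos α` once and twice in `x` relates the slopes and the
second derivatives of `y` and `ȳ`: with `q = ȳ_x̄ sin α + cos α` one gets `q (cos α - y_x sin α) = 1`
and `ȳ_x̄x̄ = q³ y_xx`. Differentiating it in `t` gives `ȳ_t = q y_t`. Substituting these into
`y_t = D(y_x) y_xx` yields the equation for `ȳ`.
-/

open Real Filter Topology

section SlopeRotation

variable {α s a : ℝ}

theorem slope_rotation_mul_eq_one (h : s * (cos α - a * sin α) = sin α + a * cos α) :
    (s * sin α + cos α) * (cos α - a * sin α) = 1 := by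
  linear_combination sin α * h + sin_sq_add_cos_sq α

theorem slope_rotation_inverse (h : s * (cos α - a * sin α) = sin α + a * cos α) :
    (s * cos α - sin α) / (s * sin α + cos α) = a := by
  have hq : s * sin α + cos α ≠ 0 := left_ne_zero_of_mul_eq_one (slope_rotation_mul_eq_one h)
  rw [div_eq_iff hq]
  linear_combination h

end SlopeRotation

section PartialDerivatives

variable {F : ℝ × ℝ → ℝ} {a b : ℝ}

theorem DifferentiableAt.fderiv_apply_one_zero (hF : DifferentiableAt ℝ F (a, b)) :
    fderiv ℝ F (a, b) (1, 0) = deriv (fun ξ => F (ξ, b)) a :=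
  (hF.hasFDerivAt.comp_hasDerivAt a ((hasDerivAt_id a).prodMk (hasDerivAt_const a b))).deriv.symm

theorem DifferentiableAt.fderiv_apply_zero_one (hF : DifferentiableAt ℝ F (a, b)) :
    fderiv ℝ F (a, b) (0, 1) = deriv (fun η => F (a, η)) b :=
  (hF.hasFDerivAt.comp_hasDerivAt b ((hasDerivAt_const b a).prodMk (hasDerivAt_id b))).deriv.symm

theorem DifferentiableAt.hasDerivAt_comp_prodMk {u v : ℝ → ℝ} {u' v' t : ℝ}
    (hF : DifferentiableAt ℝ F (u t, v t)) (hu : HasDerivAt u u' t) (hv : HasDerivAt v v' t) :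
    HasDerivAt (fun τ => F (u τ, v τ))
      (u' * deriv (fun ξ => F (ξ, v t)) (u t) + v' * deriv (fun η => F (u t, η)) (v t)) t := by
  have hsplit : ((u', v') : ℝ × ℝ) = u' • ((1 : ℝ), (0 : ℝ)) + v' • ((0 : ℝ), (1 : ℝ)) := by
    simp
  have h := hF.hasFDerivAt.comp_hasDerivAt t (hu.prodMk hv)
  rwa [hsplit, map_add, map_smul, map_smul, hF.fderiv_apply_one_zero,
    hF.fderiv_apply_zero_one] at h

end PartialDerivatives

section RotationRelations

variable {α : ℝ}

theorem rotation_slope_relation {f g : ℝ → ℝ} {x f' : ℝ} (hf : HasDerivAt f f' x)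
    (hg : DifferentiableAt ℝ g (x * cos α - f x * sin α))
    (hrot : ∀ᶠ ξ in 𝓝 x, g (ξ * cos α - f ξ * sin α) = ξ * sin α + f ξ * cos α) :
    deriv g (x * cos α - f x * sin α) * (cos α - f' * sin α) = sin α + f' * cos α := by
  have hL : HasDerivAt (fun ξ => g (ξ * cos α - f ξ * sin α))
      (deriv g (x * cos α - f x * sin α) * (cos α - f' * sin α)) x :=
    hg.hasDerivAt.comp x (((hasDerivAt_id x).mul_const _).sub (hf.mul_const _)
      |>.congr_deriv (by ring))
  have hR : HasDerivAt (fun ξ => ξ * sin α + f ξ * cos α) (sin α + f' * cos α) x :=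
    ((hasDerivAt_id x).mul_const _).add (hf.mul_const _) |>.congr_deriv (by ring)
  exact (hL.congr_of_eventuallyEq (hrot.mono fun _ h => h.symm)).unique hR

theorem rotation_curvature_relation {f g : ℝ → ℝ} {x m : ℝ}
    (hf : ∀ᶠ ξ in 𝓝 x, DifferentiableAt ℝ f ξ) (hf' : HasDerivAt (deriv f) m x)
    (hg : Differentiable ℝ g) (hg' : DifferentiableAt ℝ (deriv g) (x * cos α - f x * sin α))
    (hrot : ∀ᶠ ξ in 𝓝 x, g (ξ * cos α - f ξ * sin α) = ξ * sin α + f ξ * cos α) :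
    deriv (deriv g) (x * cos α - f x * sin α)
      = m * (deriv g (x * cos α - f x * sin α) * sin α + cos α) ^ 3 := by
  have hslope : ∀ᶠ ξ in 𝓝 x, deriv g (ξ * cos α - f ξ * sin α) * (cos α - deriv f ξ * sin α)
      = sin α + deriv f ξ * cos α := by
    filter_upwards [hf, hrot.eventually_nhds] with ξ hfξ hrotξ
    exact rotation_slope_relation hfξ.hasDerivAt (hg _) hrotξ
  have hx : HasDerivAt (fun ξ => ξ * cos α - f ξ * sin α) (cos α - deriv f x * sin α) x :=
    ((hasDerivAt_id x).mul_const _).sub (hf.self_of_nhds.hasDerivAt.mul_const _)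
      |>.congr_deriv (by ring)
  have hL := (hg'.hasDerivAt.comp x hx).mul
    ((hasDerivAt_const x (cos α)).sub (hf'.mul_const (sin α)))
  have hR := (hasDerivAt_const x (sin α)).add (hf'.mul_const (cos α))
  have hdiff := (hL.congr_of_eventuallyEq (hslope.mono fun _ h => h.symm)).unique hR
  simp only [Function.comp_apply, Pi.sub_apply] at hdiff
  have hqc := slope_rotation_mul_eq_one hslope.self_of_nhds
  set q := deriv g (x * cos α - f x * sin α) * sin α + cos α
  set c := cos α - deriv f x * sin α
  -- `hdiff` reads `g'' c² = m q`; together with `q c = 1` this gives `g'' = m q³`.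
  linear_combination q ^ 2 * hdiff - deriv (deriv g) (x * cos α - f x * sin α) * (q * c + 1) * hqc

theorem rotation_time_relation {F : ℝ × ℝ → ℝ} {h : ℝ → ℝ} {x t b : ℝ}
    (hF : DifferentiableAt ℝ F (x * cos α - h t * sin α, t)) (hh : HasDerivAt h b t)
    (hrot : ∀ᶠ τ in 𝓝 t, F (x * cos α - h τ * sin α, τ) = x * sin α + h τ * cos α) :
    deriv (fun η => F (x * cos α - h t * sin α, η)) t
      = b * (deriv (fun ξ => F (ξ, t)) (x * cos α - h t * sin α) * sin α + cos α) := by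
  have hL := hF.hasDerivAt_comp_prodMk
    ((hasDerivAt_const t (x * cos α)).sub (hh.mul_const (sin α))) (hasDerivAt_id t)
  have hR := (hasDerivAt_const t (x * sin α)).add (hh.mul_const (cos α))
  have := (hL.congr_of_eventuallyEq (hrot.mono fun _ h => h.symm)).unique hR
  simp only [id] at this
  linear_combination this

end RotationRelations

theorem anisotropic_diffusion_rotation_equivalence_general
    (D : ℝ → ℝ) (α : ℝ)
    (Ω : Set (ℝ × ℝ)) (hΩ : IsOpen Ω)
    (y : ℝ → ℝ → ℝ)
    (hyC2 : ContDiffOn ℝ 2 (fun p : ℝ × ℝ => y p.1 p.2) Ω)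
    (hyPDE : ∀ p : ℝ × ℝ, p ∈ Ω →
      deriv (fun τ => y p.1 τ) p.2
        = D (deriv (fun ξ => y ξ p.2) p.1)
            * deriv (fun ξ => deriv (fun ξ' => y ξ' p.2) ξ) p.1)
    (ybar : ℝ → ℝ → ℝ)
    (hybarC2 : ContDiff ℝ 2 (fun p : ℝ × ℝ => ybar p.1 p.2))
    (hrot : ∀ p : ℝ × ℝ, p ∈ Ω →
      ybar (p.1 * Real.cos α - y p.1 p.2 * Real.sin α) p.2
        = p.1 * Real.sin α + y p.1 p.2 * Real.cos α) :
    ∀ p : ℝ × ℝ, p ∈ Ω →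
      deriv (fun τ => ybar (p.1 * Real.cos α - y p.1 p.2 * Real.sin α) τ) p.2
        = (D (((deriv (fun ξ => ybar ξ p.2) (p.1 * Real.cos α - y p.1 p.2 * Real.sin α))
                  * Real.cos α - Real.sin α)
                / ((deriv (fun ξ => ybar ξ p.2) (p.1 * Real.cos α - y p.1 p.2 * Real.sin α))
                  * Real.sin α + Real.cos α))
              / ((deriv (fun ξ => ybar ξ p.2) (p.1 * Real.cos α - y p.1 p.2 * Real.sin α))
                  * Real.sin α + Real.cos α) ^ 2)
            * deriv (fun ξ => deriv (fun ξ' => ybar ξ' p.2) ξ)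
                (p.1 * Real.cos α - y p.1 p.2 * Real.sin α) := by
  rintro ⟨x, t⟩ hp
  have hU : IsOpen {ξ | (ξ, t) ∈ Ω} := hΩ.preimage (by fun_prop)
  have hV : {τ | (x, τ) ∈ Ω} ∈ 𝓝 t := (hΩ.preimage (by fun_prop)).mem_nhds hp
  have hf : ContDiffOn ℝ 2 (fun ξ => y ξ t) {ξ | (ξ, t) ∈ Ω} :=
    hyC2.comp (contDiffOn_id.prodMk contDiffOn_const) fun _ h => h
  have hfx : ∀ᶠ ξ in 𝓝 x, DifferentiableAt ℝ (fun ξ => y ξ t) ξ :=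
    (hf.differentiableOn two_ne_zero).eventually_differentiableAt (hU.mem_nhds hp)
  have hf'x : DifferentiableAt ℝ (deriv fun ξ => y ξ t) x :=
    ((hf.deriv_of_isOpen hU (by norm_num)).differentiableOn one_ne_zero).differentiableAt
      (hU.mem_nhds hp)
  have hg : ContDiff ℝ 2 (fun ξ => ybar ξ t) := hybarC2.comp (contDiff_id.prodMk contDiff_const)
  have hyt : DifferentiableAt ℝ (fun τ => y x τ) t :=
    ((hyC2.differentiableOn two_ne_zero).differentiableAt (hΩ.mem_nhds hp)).comp t
      ((differentiableAt_const x).prodMk differentiableAt_id)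
  have hrot_x : ∀ᶠ ξ in 𝓝 x, ybar (ξ * cos α - y ξ t * sin α) t = ξ * sin α + y ξ t * cos α :=
    mem_of_superset (hU.mem_nhds hp) fun ξ hξ => hrot (ξ, t) hξ
  have hslope := rotation_slope_relation hfx.self_of_nhds.hasDerivAt
    (hg.differentiable two_ne_zero _) hrot_x
  have hcurv := rotation_curvature_relation hfx hf'x.hasDerivAt (hg.differentiable two_ne_zero)
    (hg.differentiable_deriv_two _) hrot_x
  have htime := rotation_time_relation (F := fun p => ybar p.1 p.2)
    (hybarC2.differentiable two_ne_zero _) hyt.hasDerivAt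
    (mem_of_superset hV fun τ hτ => hrot (x, τ) hτ)
  have hq := left_ne_zero_of_mul_eq_one (slope_rotation_mul_eq_one hslope)
  dsimp only at htime hyPDE ⊢
  rw [slope_rotation_inverse hslope, htime, hyPDE _ hp, hcurv]
  field_simp

/-- Rotational equivalence of anisotropic diffusion equations: if `y` is a C²
solution of `y_t = D(y_x)·y_xx` on an open set `Ω` with `cos α + y_x·sin α > 0`,
and the graph of `ȳ(·,t)` is the rotation by angle `α` of the graph of `y(·,t)`,
then `ȳ` satisfies `ȳ_t = D̄(ȳ_x̄)·ȳ_x̄x̄` with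
`D̄(s) = D((s·cos α − sin α)/(s·sin α + cos α)) / (s·sin α + cos α)²`. -/
theorem anisotropic_diffusion_rotation_equivalence
    (D : ℝ → ℝ) (hD : Continuous D) (α : ℝ)
    (Ω : Set (ℝ × ℝ)) (hΩ : IsOpen Ω)
    (y : ℝ → ℝ → ℝ)
    (hyC2 : ContDiffOn ℝ 2 (fun p : ℝ × ℝ => y p.1 p.2) Ω)
    (hyPDE : ∀ p : ℝ × ℝ, p ∈ Ω →
      deriv (fun τ => y p.1 τ) p.2
        = D (deriv (fun ξ => y ξ p.2) p.1)
            * deriv (fun ξ => deriv (fun ξ' => y ξ' p.2) ξ) p.1)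
    (hpos : ∀ p : ℝ × ℝ, p ∈ Ω →
      0 < Real.cos α + deriv (fun ξ => y ξ p.2) p.1 * Real.sin α)
    (ybar : ℝ → ℝ → ℝ)
    (hybarC2 : ContDiff ℝ 2 (fun p : ℝ × ℝ => ybar p.1 p.2))
    (hrot : ∀ p : ℝ × ℝ, p ∈ Ω →
      ybar (p.1 * Real.cos α - y p.1 p.2 * Real.sin α) p.2
        = p.1 * Real.sin α + y p.1 p.2 * Real.cos α) :
    ∀ p : ℝ × ℝ, p ∈ Ω →
      deriv (fun τ => ybar (p.1 * Real.cos α - y p.1 p.2 * Real.sin α) τ) p.2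
        = (D (((deriv (fun ξ => ybar ξ p.2) (p.1 * Real.cos α - y p.1 p.2 * Real.sin α))
                  * Real.cos α - Real.sin α)
                / ((deriv (fun ξ => ybar ξ p.2) (p.1 * Real.cos α - y p.1 p.2 * Real.sin α))
                  * Real.sin α + Real.cos α))
              / ((deriv (fun ξ => ybar ξ p.2) (p.1 * Real.cos α - y p.1 p.2 * Real.sin α))
                  * Real.sin α + Real.cos α) ^ 2)
            * deriv (fun ξ => deriv (fun ξ' => ybar ξ' p.2) ξ)
                (p.1 * Real.cos α - y p.1 p.2 * Real.sin α) :=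
  anisotropic_diffusion_rotation_equivalence_general D α Ω hΩ y hyC2 hyPDE ybar hybarC2 hrot
end

section
/- Let β > 0 and t₀ ∈ ℝ. The function y(x,t) = (1/β)·√(2(t₀ − t) − x²), defined on {(x,t) : t < t₀, x² < 2(t₀ − t)}, satisfies the anisotropic diffusion equation y_t = D(y_x)·y_xx with D(u) = 1/(1 + (βu)²) at every point of its domain. Its graph, together with its reflection in the x-axis, is the homothetically shrinking ельlipse x²/(2(t₀ − t)) + β²y²/(2(t₀ − t)) = 1, elongated in the direction of weakest evaporation. -/
/-!
Write `s = 2(t₀ - t) - x²`, so that `β y = √s`. Then `y_t = -1/(β√s)`, `y_x = -x/(β√s)` and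
`y_xx = -2(t₀ - t)/(β s^{3/2})`. Since `1 + (β y_x)² = (s + x²)/s = 2(t₀ - t)/s`, the diffusivity
cancels the factor `2(t₀ - t)` in `y_xx` and leaves exactly `y_t`. The ellipse identity is `β² y² = s`.
-/

open Filter Topology

section SqrtSubSq

variable {c ξ : ℝ}

theorem hasDerivAt_sqrt_sub_sq (h : ξ ^ 2 < c) :
    HasDerivAt (fun ξ => √(c - ξ ^ 2)) (-ξ / √(c - ξ ^ 2)) ξ := by
  have hpos : c - ξ ^ 2 ≠ 0 := by linarith
  convert ((hasDerivAt_pow 2 ξ).const_sub c).sqrt hpos using 1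
  have : √(c - ξ ^ 2) ≠ 0 := by positivity
  field_simp
  ring

theorem deriv_sqrt_sub_sq_eventuallyEq (h : ξ ^ 2 < c) :
    deriv (fun ξ => √(c - ξ ^ 2)) =ᶠ[𝓝 ξ] fun ξ => -ξ / √(c - ξ ^ 2) := by
  have hopen : IsOpen {ξ : ℝ | ξ ^ 2 < c} := isOpen_lt (by fun_prop) continuous_const
  filter_upwards [hopen.mem_nhds h] with η hη using (hasDerivAt_sqrt_sub_sq hη).deriv

theorem hasDerivAt_deriv_sqrt_sub_sq (h : ξ ^ 2 < c) :
    HasDerivAt (deriv fun ξ => √(c - ξ ^ 2)) (-c / √(c - ξ ^ 2) ^ 3) ξ := by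
  have hs : √(c - ξ ^ 2) ≠ 0 := by
    have : 0 < c - ξ ^ 2 := by linarith
    positivity
  have hquot := (hasDerivAt_neg ξ).div (hasDerivAt_sqrt_sub_sq h) hs
  refine (hquot.congr_of_eventuallyEq (deriv_sqrt_sub_sq_eventuallyEq h)).congr_deriv ?_
  have hsq : √(c - ξ ^ 2) ^ 2 = c - ξ ^ 2 := Real.sq_sqrt (by linarith)
  field_simp
  linear_combination (-1) * hsq

end SqrtSubSq

theorem hasDerivAt_sqrt_two_mul_sub_sub_sq {t₀ x t : ℝ} (h : x ^ 2 < 2 * (t₀ - t)) :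
    HasDerivAt (fun τ => √(2 * (t₀ - τ) - x ^ 2)) (-1 / √(2 * (t₀ - t) - x ^ 2)) t := by
  have hpos : 2 * (t₀ - t) - x ^ 2 ≠ 0 := by linarith
  have hlin : HasDerivAt (fun τ => 2 * (t₀ - τ) - x ^ 2) (-2) t := by
    simpa using (((hasDerivAt_id t).const_sub t₀).const_mul 2).sub_const (x ^ 2)
  convert hlin.sqrt hpos using 1
  have : √(2 * (t₀ - t) - x ^ 2) ≠ 0 := by positivity
  field_simp

theorem shrinking_ellipse_for_anisotropic_diffusion_general
    (β : ℝ) (hβ : 0 < β) (t₀ : ℝ)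
    (y : ℝ → ℝ → ℝ)
    (hy : ∀ x t : ℝ, y x t = (1 / β) * Real.sqrt (2 * (t₀ - t) - x ^ 2))
    (x t : ℝ) (hx : x ^ 2 < 2 * (t₀ - t)) :
    deriv (fun τ => y x τ) t
      = (1 / (1 + (β * deriv (fun ξ => y ξ t) x) ^ 2))
          * deriv (fun ξ => deriv (fun ξ' => y ξ' t) ξ) x ∧
    x ^ 2 / (2 * (t₀ - t)) + β ^ 2 * (y x t) ^ 2 / (2 * (t₀ - t)) = 1 := by
  set c := 2 * (t₀ - t)
  have hs : 0 < c - x ^ 2 := by linarith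
  have hsq : √(c - x ^ 2) ^ 2 = c - x ^ 2 := Real.sq_sqrt hs.le
  have hc : 0 < c := by nlinarith
  have hyx : (fun ξ => y ξ t) = fun ξ => 1 / β * √(c - ξ ^ 2) := funext (hy · t)
  have hyxt : y x t = 1 / β * √(c - x ^ 2) := hy x t
  have hyt : deriv (fun τ => y x τ) t = 1 / β * (-1 / √(c - x ^ 2)) := by
    simp_rw [hy x]
    exact ((hasDerivAt_sqrt_two_mul_sub_sub_sq hx).const_mul _).deriv
  have hyξ : deriv (fun ξ => y ξ t) x = 1 / β * (-x / √(c - x ^ 2)) := by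
    simp only [hyx, deriv_const_mul_field', (hasDerivAt_sqrt_sub_sq hx).deriv]
  have hyξξ : deriv (fun ξ => deriv (fun ξ' => y ξ' t) ξ) x
      = 1 / β * (-c / √(c - x ^ 2) ^ 3) := by
    simp only [hyx, deriv_const_mul_field', (hasDerivAt_deriv_sqrt_sub_sq hx).deriv]
  clear_value c
  refine ⟨?_, ?_⟩
  · rw [hyt, hyξ, hyξξ]
    field_simp
    linear_combination (-1) * hsq
  · rw [hyxt, mul_pow, hsq]
    field_simp
    ring

/-- The function `y(x,t) = (1/β)·√(2(t₀−t) − x²)` satisfies the anisotropic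
diffusion equation `y_t = D(y_x)·y_xx` with `D(u) = 1/(1+(βu)²)` on its domain
`{(x,t) : t < t₀, x² < 2(t₀−t)}`, and its graph (together with its reflection in
the x-axis) is the homothetically shrinking ellipse
`x²/(2(t₀−t)) + β²y²/(2(t₀−t)) = 1`. -/
theorem shrinking_ellipse_for_anisotropic_diffusion
    (β : ℝ) (hβ : 0 < β) (t₀ : ℝ)
    (y : ℝ → ℝ → ℝ)
    (hy : ∀ x t : ℝ, y x t = (1 / β) * Real.sqrt (2 * (t₀ - t) - x ^ 2))
    (x t : ℝ) (ht : t < t₀) (hx : x ^ 2 < 2 * (t₀ - t)) :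
    deriv (fun τ => y x τ) t
      = (1 / (1 + (β * deriv (fun ξ => y ξ t) x) ^ 2))
          * deriv (fun ξ => deriv (fun ξ' => y ξ' t) ξ) x ∧
    x ^ 2 / (2 * (t₀ - t)) + β ^ 2 * (y x t) ^ 2 / (2 * (t₀ - t)) = 1 :=
  shrinking_ellipse_for_anisotropic_diffusion_general β hβ t₀ y hy x t hx
end

section
/- Let v be a C³ real-valued function on an open interval I satisfying the ODE v'''(x) + (1/2)·(v'(x))³ = 0 on I. Then the two functions x ↦ v''(x)·cos(v(x)) + (1/2)·(v'(x))²·sin(v(x)) and x ↦ −v''(x)·sin(v(x)) + (1/2)·(v'(x))²·cos(v(x)) have identically zero derivative on I, i.e., they are first integrals of the ODE, constant equal to some λ, μ ∈ ℝ respectively; moreover these imply (v'(x))² = 2(μ·cos(v(x)) + λ·sin(v(x))) on I. -/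
/-!
With `p = v'` and `q = v''`, differentiating `q cos v + ½ p² sin v` and `-q sin v + ½ p² cos v`
the cross terms `± p q sin v`, `± p q cos v` cancel, leaving `(v''' + ½ v'³) cos v` and
`-(v''' + ½ v'³) sin v`, which vanish by the ODE. On the interval both are therefore constants
`λ`, `μ`. Since `(λ, μ)` is `(q, ½ p²)` rotated by the angle `-v`, rotating back gives
`½ p² = μ cos v + λ sin v`.
-/

open Real Set

theorem ContDiffOn.hasDerivAt_deriv {𝕜 F : Type*} [NontriviallyNormedField 𝕜]
    [NormedAddCommGroup F] [NormedSpace 𝕜 F] {f : 𝕜 → F} {s : Set 𝕜} {n : WithTop ℕ∞}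
    {x : 𝕜}
    (hf : ContDiffOn 𝕜 n f s) (hn : n ≠ 0) (hs : IsOpen s) (hx : x ∈ s) :
    HasDerivAt f (deriv f x) x :=
  ((hf.differentiableOn hn).differentiableAt (hs.mem_nhds hx)).hasDerivAt

theorem IsOpen.exists_forall_eq_of_hasDerivAt_zero {𝕜 G : Type*} [RCLike 𝕜]
    [NormedAddCommGroup G] [NormedSpace 𝕜 G] {f : 𝕜 → G} {s : Set 𝕜}
    (hs : IsOpen s) (hs' : IsPreconnected s) (hf : ∀ x ∈ s, HasDerivAt f 0 x) :
    ∃ c, ∀ x ∈ s, f x = c :=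
  hs.exists_is_const_of_deriv_eq_zero hs'
    (fun x hx => (hf x hx).differentiableAt.differentiableWithinAt) (fun x hx => (hf x hx).deriv)

section FirstIntegrals

variable {u p q : ℝ → ℝ} {x r : ℝ}

theorem hasDerivAt_mul_cos_add_half_sq_mul_sin (hu : HasDerivAt u (p x) x)
    (hp : HasDerivAt p (q x) x) (hq : HasDerivAt q r x) :
    HasDerivAt (fun ξ => q ξ * cos (u ξ) + 1 / 2 * p ξ ^ 2 * sin (u ξ))
      ((r + 1 / 2 * p x ^ 3) * cos (u x)) x :=
  ((hq.mul hu.cos).add (((hp.fun_pow 2).const_mul (1 / 2 : ℝ)).mul hu.sin)).congr_deriv (by ring)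

theorem hasDerivAt_neg_mul_sin_add_half_sq_mul_cos (hu : HasDerivAt u (p x) x)
    (hp : HasDerivAt p (q x) x) (hq : HasDerivAt q r x) :
    HasDerivAt (fun ξ => -q ξ * sin (u ξ) + 1 / 2 * p ξ ^ 2 * cos (u ξ))
      (-(r + 1 / 2 * p x ^ 3) * sin (u x)) x :=
  ((hq.fun_neg.mul hu.sin).add (((hp.fun_pow 2).const_mul (1 / 2 : ℝ)).mul hu.cos)).congr_deriv
    (by ring)

end FirstIntegrals

theorem sq_eq_of_rotation_eq {p q u lam mu : ℝ}
    (hlam : q * cos u + 1 / 2 * p ^ 2 * sin u = lam)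
    (hmu : -q * sin u + 1 / 2 * p ^ 2 * cos u = mu) :
    p ^ 2 = 2 * (mu * cos u + lam * sin u) := by
  linear_combination 2 * sin u * hlam + 2 * cos u * hmu - p ^ 2 * sin_sq_add_cos_sq u

/-- First integrals of the ODE `v''' + (1/2)(v')³ = 0` arising in functional
separation of variables for the anisotropic diffusion model: the functions
`v''·cos v + (1/2)(v')²·sin v` and `−v''·sin v + (1/2)(v')²·cos v` have zero
derivative on `I`, hence are constants `λ`, `μ`, and consequently
`(v')² = 2(μ·cos v + λ·sin v)` on `I`. -/
theorem first_integrals_of_separation_ODE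
    (a b : ℝ) (v : ℝ → ℝ)
    (hv : ContDiffOn ℝ 3 v (Set.Ioo a b))
    (hODE : ∀ x ∈ Set.Ioo a b,
      deriv (deriv (deriv v)) x + (1 / 2) * (deriv v x) ^ 3 = 0) :
    (∀ x ∈ Set.Ioo a b,
      deriv (fun ξ => deriv (deriv v) ξ * Real.cos (v ξ)
        + (1 / 2) * (deriv v ξ) ^ 2 * Real.sin (v ξ)) x = 0) ∧
    (∀ x ∈ Set.Ioo a b,
      deriv (fun ξ => -(deriv (deriv v) ξ) * Real.sin (v ξ)
        + (1 / 2) * (deriv v ξ) ^ 2 * Real.cos (v ξ)) x = 0) ∧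
    ∃ lam mu : ℝ, ∀ x ∈ Set.Ioo a b,
      deriv (deriv v) x * Real.cos (v x) + (1 / 2) * (deriv v x) ^ 2 * Real.sin (v x) = lam ∧
      -(deriv (deriv v) x) * Real.sin (v x) + (1 / 2) * (deriv v x) ^ 2 * Real.cos (v x) = mu ∧
      (deriv v x) ^ 2 = 2 * (mu * Real.cos (v x) + lam * Real.sin (v x)) := by
  have hv' : ContDiffOn ℝ 2 (deriv v) (Ioo a b) := hv.deriv_of_isOpen isOpen_Ioo (by norm_num)
  have hv'' : ContDiffOn ℝ 1 (deriv (deriv v)) (Ioo a b) :=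
    hv'.deriv_of_isOpen isOpen_Ioo (by norm_num)
  have hd {x} (hx : x ∈ Ioo a b) :
      HasDerivAt v (deriv v x) x ∧ HasDerivAt (deriv v) (deriv (deriv v) x) x ∧
        HasDerivAt (deriv (deriv v)) (deriv (deriv (deriv v)) x) x :=
    ⟨hv.hasDerivAt_deriv (by norm_num) isOpen_Ioo hx,
      hv'.hasDerivAt_deriv (by norm_num) isOpen_Ioo hx,
      hv''.hasDerivAt_deriv (by norm_num) isOpen_Ioo hx⟩
  have hF x (hx : x ∈ Ioo a b) :=
    (hasDerivAt_mul_cos_add_half_sq_mul_sin (hd hx).1 (hd hx).2.1 (hd hx).2.2).congr_deriv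
      (by rw [hODE x hx, zero_mul])
  have hG x (hx : x ∈ Ioo a b) :=
    (hasDerivAt_neg_mul_sin_add_half_sq_mul_cos (hd hx).1 (hd hx).2.1 (hd hx).2.2).congr_deriv
      (by rw [hODE x hx, neg_zero, zero_mul])
  obtain ⟨lam, hlam⟩ := isOpen_Ioo.exists_forall_eq_of_hasDerivAt_zero isPreconnected_Ioo hF
  obtain ⟨mu, hmu⟩ := isOpen_Ioo.exists_forall_eq_of_hasDerivAt_zero isPreconnected_Ioo hG
  exact ⟨fun x hx => (hF x hx).deriv, fun x hx => (hG x hx).deriv, lam, mu,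
    fun x hx => ⟨hlam x hx, hmu x hx, sq_eq_of_rotation_eq (hlam x hx) (hmu x hx)⟩⟩
end
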